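/- The generating function F_2(x) of ordered rooted binary trees containing no caterpillar subtree of size 3 (no pitchfork) equals (1 − √(1 − 4x + 8x^3))/2, i.e., F_2 satisfies F_2 = x + F_2^2 − 2x^3 as formal power series. -/

import Mathlib

/-- Ordered rooted binary trees: a tree is a leaf or an internal node with two ordered children. -/
inductive BTree where
  | leaf : BTree
  | node : BTree → BTree → BTree

/-- Size of a tree = number of leaves. -/
def BTree.size : BTree → ℕ
  | .leaf => 1
  | .node l r => l.size + r.size

/-- A tree is a caterpillar if every internal node has at least one leaf child. -/
def BTree.isCaterpillar : BTree → Prop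
  | .leaf => True
  | .node l r => (l = .leaf ∨ r = .leaf) ∧ l.isCaterpillar ∧ r.isCaterpillar

/-- The list of all subtrees (rooted at some node) of a tree. -/
def BTree.subtrees : BTree → List BTree
  | .leaf => [.leaf]
  | .node l r => .node l r :: (l.subtrees ++ r.subtrees)

/-- γ(t): the size of the biggest caterpillar subtree of `t`. -/
noncomputable def BTree.gamma (t : BTree) : ℕ :=
  sSup {m | ∃ s ∈ t.subtrees, s.isCaterpillar ∧ s.size = m}

/-- `fcount k n`: number of ordered rooted binary trees of size `n` with γ ≤ k. -/
noncomputable def fcount (k n : ℕ) : ℕ :=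
  Nat.card {t : BTree // t.size = n ∧ t.gamma ≤ k}

/-! A node is pitchfork-free iff both children are and it is not itself a pitchfork, and the
only pitchforks are the two nodes with children (leaf, cherry) and (cherry, leaf). So the pairs
of pitchfork-free trees of total size `n` are the pitchfork-free trees of size `n ≥ 2` together
with the two pitchforks when `n = 3`: `f n + 2 [n = 3] = [n = 1] + ∑_{i+j=n} f i * f j`, which is
`F = x + F² - 2x³` read coefficientwise. Completing the square gives
`(1 - 2F)² = 1 - 4x + 8x³`. -/

namespace BTree

open Finset

def cherry : BTree := node leaf leaf

def IsPitchfork (t : BTree) : Prop := t = node leaf cherry ∨ t = node cherry leaf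

lemma one_le_size (t : BTree) : 1 ≤ t.size := by
  induction t with
  | leaf => exact le_rfl
  | node l r _ _ => simp only [size]; omega

lemma size_eq_one_iff {t : BTree} : t.size = 1 ↔ t = leaf := by
  cases t with
  | leaf => simp [size]
  | node l r =>
    have := l.one_le_size
    have := r.one_le_size
    simp only [size, reduceCtorEq, iff_false]
    omega

lemma size_eq_two_iff {t : BTree} : t.size = 2 ↔ t = cherry := by
  cases t with
  | leaf => simp [size, cherry]
  | node l r =>
    have := l.one_le_size
    have := r.one_le_size
    simp only [size, cherry, node.injEq, ← size_eq_one_iff]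
    omega

lemma size_of_isPitchfork {t : BTree} (h : t.IsPitchfork) : t.size = 3 := by
  rcases h with rfl | rfl <;> rfl

def toBinaryTree : BTree → BinaryTree Unit
  | leaf => .nil
  | node l r => .node () l.toBinaryTree r.toBinaryTree

lemma toBinaryTree_injective : Function.Injective toBinaryTree := by
  intro s t h
  induction s generalizing t with
  | leaf => cases t <;> simp_all [toBinaryTree]
  | node l r ihl ihr =>
    cases t with
    | leaf => simp [toBinaryTree] at h
    | node l' r' =>
      simp only [toBinaryTree, BinaryTree.node.injEq, true_and] at h
      rw [ihl h.1, ihr h.2]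

lemma numNodes_toBinaryTree_add_one (t : BTree) : t.toBinaryTree.numNodes + 1 = t.size := by
  induction t with
  | leaf => rfl
  | node l r ihl ihr => simp only [toBinaryTree, BinaryTree.numNodes, size]; omega

lemma finite_setOf_size_eq (n : ℕ) : {t : BTree | t.size = n}.Finite := by
  refine ((BinaryTree.treesOfNumNodesEq (n - 1)).finite_toSet.preimage
    toBinaryTree_injective.injOn).subset fun t (ht : t.size = n) => ?_
  have := numNodes_toBinaryTree_add_one t
  simp only [Set.mem_preimage, Finset.mem_coe, BinaryTree.mem_treesOfNumNodesEq]
  omega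

lemma self_mem_subtrees (t : BTree) : t ∈ t.subtrees := by
  cases t <;> simp [subtrees]

lemma leaf_mem_subtrees (t : BTree) : leaf ∈ t.subtrees := by
  induction t with
  | leaf => simp [subtrees]
  | node l r ihl _ => simp [subtrees, ihl]

lemma size_le_of_mem_subtrees {s t : BTree} (h : s ∈ t.subtrees) : s.size ≤ t.size := by
  induction t with
  | leaf => simp_all [subtrees]
  | node l r ihl ihr =>
    simp only [subtrees, List.mem_cons, List.mem_append] at h
    rcases h with rfl | h | h
    · exact le_rfl
    · exact (ihl h).trans (Nat.le_add_right _ _)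
    · exact (ihr h).trans (Nat.le_add_left _ _)

lemma gamma_le_iff {t : BTree} {k : ℕ} :
    t.gamma ≤ k ↔ ∀ s ∈ t.subtrees, s.isCaterpillar → s.size ≤ k := by
  unfold gamma
  refine ⟨fun h s hs hc => h.trans' (le_csSup ?_ ⟨s, hs, hc, rfl⟩), fun h => ?_⟩
  · refine ⟨t.size, ?_⟩
    rintro m ⟨u, hu, -, rfl⟩
    exact size_le_of_mem_subtrees hu
  · refine csSup_le ⟨1, leaf, t.leaf_mem_subtrees, trivial, rfl⟩ ?_
    rintro m ⟨s, hs, hc, rfl⟩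
    exact h s hs hc

lemma size_le_of_gamma_le {t : BTree} {k : ℕ} (h : t.gamma ≤ k) (hc : t.isCaterpillar) :
    t.size ≤ k :=
  gamma_le_iff.mp h t t.self_mem_subtrees hc

lemma gamma_leaf_le_iff {k : ℕ} : leaf.gamma ≤ k ↔ 1 ≤ k := by
  simp [gamma_le_iff, subtrees, isCaterpillar, size]

lemma gamma_node_le_iff {l r : BTree} {k : ℕ} :
    (node l r).gamma ≤ k ↔
      ((node l r).isCaterpillar → l.size + r.size ≤ k) ∧ l.gamma ≤ k ∧ r.gamma ≤ k := by
  simp only [gamma_le_iff, subtrees, List.mem_cons, List.mem_append, or_imp, forall_and,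
    forall_eq]
  rfl

lemma gamma_node_le_two_iff {l r : BTree} :
    (node l r).gamma ≤ 2 ↔ l.gamma ≤ 2 ∧ r.gamma ≤ 2 ∧ ¬ (node l r).IsPitchfork := by
  rw [gamma_node_le_iff, and_comm, and_assoc]
  refine and_congr_right fun hl => and_congr_right fun hr => ⟨?_, ?_⟩
  · rintro h (h' | h') <;>
      simp only [node.injEq] at h' <;> obtain ⟨rfl, rfl⟩ := h' <;>
      simp [isCaterpillar, cherry, size] at h
  · rintro hp ⟨hleaf | hleaf, hcl, hcr⟩ <;> subst hleaf
    · have := size_le_of_gamma_le hr hcr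
      have : r.size ≠ 2 := fun h => hp (.inl (by rw [size_eq_two_iff.mp h]))
      simp only [size]
      omega
    · have := size_le_of_gamma_le hl hcl
      have : l.size ≠ 2 := fun h => hp (.inr (by rw [size_eq_two_iff.mp h]))
      simp only [size]
      omega

lemma card_pairs_eq_sum_antidiagonal (P : BTree → Prop) (n : ℕ) :
    Nat.card {p : BTree × BTree // p.1.size + p.2.size = n ∧ P p.1 ∧ P p.2} =
      ∑ ij ∈ antidiagonal n,
        Nat.card {t : BTree // t.size = ij.1 ∧ P t} *
          Nat.card {t : BTree // t.size = ij.2 ∧ P t} := by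
  have (i : ℕ) : Finite {t : BTree // t.size = i ∧ P t} :=
    ((finite_setOf_size_eq i).subset fun _ ht => ht.1).to_subtype
  let split : {p : BTree × BTree // p.1.size + p.2.size = n ∧ P p.1 ∧ P p.2} ≃
      Σ ij : antidiagonal n,
        {t : BTree // t.size = ij.1.1 ∧ P t} × {t : BTree // t.size = ij.1.2 ∧ P t} :=
    { toFun := fun p => ⟨⟨(p.1.1.size, p.1.2.size), mem_antidiagonal.2 p.2.1⟩,
        ⟨p.1.1, rfl, p.2.2.1⟩, ⟨p.1.2, rfl, p.2.2.2⟩⟩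
      invFun := fun x => ⟨(x.2.1.1, x.2.2.1), by
        rw [x.2.1.2.1, x.2.2.2.1]
        exact ⟨mem_antidiagonal.1 x.1.2, x.2.1.2.2, x.2.2.2.2⟩⟩
      left_inv := fun _ => rfl
      right_inv := by
        rintro ⟨⟨⟨i, j⟩, hij⟩, ⟨l, hl, hPl⟩, ⟨r, hr, hPr⟩⟩
        dsimp only at hl hr
        subst hl hr
        rfl }
  simp only [Nat.card_congr split, Nat.card_sigma, Nat.card_prod]
  exact sum_coe_sort (antidiagonal n) fun ij =>
    Nat.card {t : BTree // t.size = ij.1 ∧ P t} * Nat.card {t : BTree // t.size = ij.2 ∧ P t}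

lemma card_pairs_node {Q : BTree → Prop} (hQ : ¬ Q leaf) :
    Nat.card {p : BTree × BTree // Q (node p.1 p.2)} = Nat.card {t : BTree // Q t} := by
  refine Nat.card_congr <| Equiv.ofBijective (fun p => ⟨node p.1.1 p.1.2, p.2⟩) ⟨?_, ?_⟩
  · rintro ⟨⟨l, r⟩, _⟩ ⟨⟨l', r'⟩, _⟩ h
    simp only [Subtype.mk.injEq, node.injEq] at h
    obtain ⟨rfl, rfl⟩ := h
    rfl
  · rintro ⟨_ | ⟨l, r⟩, h⟩
    · exact absurd h hQ
    · exact ⟨⟨(l, r), h⟩, rfl⟩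

lemma card_setOf_isPitchfork_node (n : ℕ) :
    {p : BTree × BTree | (node p.1 p.2).size = n ∧ (node p.1 p.2).IsPitchfork}.ncard =
      if n = 3 then 2 else 0 := by
  split_ifs with hn
  · subst hn
    convert Set.ncard_pair (a := (leaf, cherry)) (b := (cherry, leaf)) (by simp [cherry])
    ext ⟨l, r⟩
    simp only [IsPitchfork, Set.mem_ofPred_eq, Set.mem_insert_iff, Set.mem_singleton_iff,
      node.injEq, Prod.mk.injEq]
    constructor
    · exact And.right
    · rintro (⟨rfl, rfl⟩ | ⟨rfl, rfl⟩) <;> simp [size, cherry]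
  · convert Set.ncard_empty (BTree × BTree)
    ext p
    simp only [Set.mem_ofPred_eq, Set.mem_empty_iff_false, iff_false, not_and]
    exact fun hs hp => hn (hs ▸ size_of_isPitchfork hp)

lemma card_pairs_gamma_le_two (n : ℕ) :
    Nat.card {p : BTree × BTree //
        p.1.size + p.2.size = n ∧ p.1.gamma ≤ 2 ∧ p.2.gamma ≤ 2} =
      Nat.card {p : BTree × BTree // (node p.1 p.2).size = n ∧ (node p.1 p.2).gamma ≤ 2} +
        if n = 3 then 2 else 0 := by
  have hsplit :
      {p : BTree × BTree | p.1.size + p.2.size = n ∧ p.1.gamma ≤ 2 ∧ p.2.gamma ≤ 2} =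
      {p | (node p.1 p.2).size = n ∧ (node p.1 p.2).gamma ≤ 2} ∪
        {p | (node p.1 p.2).size = n ∧ (node p.1 p.2).IsPitchfork} := by
    ext ⟨l, r⟩
    simp only [Set.mem_ofPred_eq, Set.mem_union, gamma_node_le_two_iff, size]
    by_cases hp : (node l r).IsPitchfork
    · rcases hp with h | h <;> simp only [node.injEq] at h <;> obtain ⟨rfl, rfl⟩ := h <;>
        simp [cherry, gamma_node_le_iff, gamma_leaf_le_iff, IsPitchfork, size]
    · tauto
  have hdisj :
      Disjoint {p : BTree × BTree | (node p.1 p.2).size = n ∧ (node p.1 p.2).gamma ≤ 2}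
        {p | (node p.1 p.2).size = n ∧ (node p.1 p.2).IsPitchfork} :=
    Set.disjoint_left.2 fun _ h h' => (gamma_node_le_two_iff.1 h.2).2.2 h'.2
  have hfin : {p : BTree × BTree | (node p.1 p.2).size = n}.Finite :=
    (finite_setOf_size_eq n).preimage fun _ _ _ _ h => by simpa [Prod.ext_iff] using h
  rw [← card_setOf_isPitchfork_node]
  exact (congrArg Set.ncard hsplit).trans
    (Set.ncard_union_eq hdisj (hfin.subset fun _ h => h.1) (hfin.subset fun _ h => h.1))

end BTree

open Finset BTree

lemma fcount_two_one : fcount 2 1 = 1 := by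
  have : {t : BTree | t.size = 1 ∧ t.gamma ≤ 2} = {leaf} := by
    ext t
    simp only [Set.mem_ofPred_eq, Set.mem_singleton_iff, size_eq_one_iff, and_iff_left_iff_imp]
    rintro rfl
    exact gamma_leaf_le_iff.2 one_le_two
  exact (congrArg Set.ncard this).trans (Set.ncard_singleton leaf)

lemma fcount_two_add_ite (n : ℕ) :
    fcount 2 n + (if n = 3 then 2 else 0) =
      (if n = 1 then 1 else 0) + ∑ ij ∈ antidiagonal n, fcount 2 ij.1 * fcount 2 ij.2 := by
  simp only [fcount]
  rw [← card_pairs_eq_sum_antidiagonal (·.gamma ≤ 2)]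
  by_cases hn : n = 1
  · subst hn
    have : IsEmpty
        {p : BTree × BTree // p.1.size + p.2.size = 1 ∧ p.1.gamma ≤ 2 ∧ p.2.gamma ≤ 2} :=
      ⟨fun ⟨⟨l, r⟩, (h : l.size + r.size = 1), _⟩ => by
        have := l.one_le_size
        have := r.one_le_size
        omega⟩
    simpa [Nat.card_of_isEmpty, fcount] using fcount_two_one
  · rw [card_pairs_gamma_le_two, card_pairs_node (Q := fun t => t.size = n ∧ t.gamma ≤ 2)
      (fun h => hn h.1.symm), if_neg hn, zero_add]

/-- The generating function `F_2(x)` of pitchfork-free ordered rooted binary trees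
(no caterpillar subtree of size ≥ 3) satisfies `F_2 = x + F_2² − 2x³`, i.e. it equals
`(1 − √(1 − 4x + 8x³))/2` in the sense that `(1 − 2 F_2)² = 1 − 4x + 8x³`. -/
theorem pitchfork_free_gf :
    (PowerSeries.mk fun n => (fcount 2 n : ℚ)) =
        PowerSeries.X + (PowerSeries.mk fun n => (fcount 2 n : ℚ)) ^ 2 -
          PowerSeries.C (2 : ℚ) * PowerSeries.X ^ 3 ∧
      (1 - 2 * PowerSeries.mk fun n => (fcount 2 n : ℚ)) ^ 2 =
        1 - 4 * PowerSeries.X + 8 * (PowerSeries.X : PowerSeries ℚ) ^ 3 := by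
  have hrec : (PowerSeries.mk fun n => (fcount 2 n : ℚ)) =
      PowerSeries.X + (PowerSeries.mk fun n => (fcount 2 n : ℚ)) ^ 2 -
        PowerSeries.C (2 : ℚ) * PowerSeries.X ^ 3 := by
    ext n
    have h := congrArg (Nat.cast : ℕ → ℚ) (fcount_two_add_ite n)
    push_cast [apply_ite (Nat.cast : ℕ → ℚ)] at h
    rw [map_sub, map_add, PowerSeries.coeff_C_mul_X_pow, sq, PowerSeries.coeff_mul]
    simp only [PowerSeries.coeff_mk, PowerSeries.coeff_X]
    split_ifs at h ⊢ <;> linarith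
  refine ⟨hrec, ?_⟩
  rw [map_ofNat] at hrec
  linear_combination (-4 : PowerSeries ℚ) * hrec
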